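/- Bump lemma for monotone protocols: let Π be a monotone order-oblivious protocol for G_n, let σ be a permutation, and let τ be obtained from σ by moving (bumping) some elements to the end while preserving the relative order of the others. If the first m elements τ₁,…,τ_m of τ were never bumped and Alice wrote 0 on each of the locations τ₁,…,τ_m when streamed σ, then Alice also writes 0 on each of τ₁,…,τ_m when streamed τ. -/

import Mathlib

/-- The partial assignment written by an order-oblivious protocol `B` after `t` steps of
the stream `σ` (the element arriving at time `t` is `σ t`; `B ℓ α` is the bit Alice writes
at an arriving location `ℓ` when the current partial assignment is `α`). -/
def partOO {n : ℕ} (B : Fin n → (Fin n → Option Bool) → Bool) (σ : Equiv.Perm (Fin n)) :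
    ℕ → (Fin n → Option Bool)
  | 0 => fun _ => none
  | t + 1 =>
    if h : t < n then
      Function.update (partOO B σ t) (σ ⟨t, h⟩) (some (B (σ ⟨t, h⟩) (partOO B σ t)))
    else partOO B σ t

/-- The bit written by the order-oblivious protocol `B` at location `ℓ` on stream `σ`. -/
def writeOO {n : ℕ} (B : Fin n → (Fin n → Option Bool) → Bool) (σ : Equiv.Perm (Fin n))
    (ℓ : Fin n) : Bool :=
  B ℓ (partOO B σ ((σ.symm ℓ : ℕ)))

/-- The hypercube edge `Π_A(σ)`: the array written after the first `n - 1` steps, with a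
single unfilled (`none`) coordinate at the last location `σ (n-1)`. -/
def edgeOO {n : ℕ} (B : Fin n → (Fin n → Option Bool) → Bool) (σ : Equiv.Perm (Fin n)) :
    Fin n → Option Bool :=
  partOO B σ (n - 1)

/-- `v ∈ {0,1}^n` is an endpoint of the edge `e` (with `*` encoded as `none`). -/
def Compatible {n : ℕ} (v : Fin n → Bool) (e : Fin n → Option Bool) : Prop :=
  ∀ ℓ b, e ℓ = some b → v ℓ = b

/-- The degree of the vertex `v` in the graph `E(Π)` of the order-oblivious protocol `B`. -/
noncomputable def degOO {n : ℕ} (B : Fin n → (Fin n → Option Bool) → Bool)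
    (v : Fin n → Bool) : ℕ :=
  {e : Fin n → Option Bool | (∃ σ : Equiv.Perm (Fin n), edgeOO B σ = e) ∧
    Compatible v e}.ncard

/-- `β` extends `α` as a partial assignment. -/
def OExtends {n : ℕ} (α β : Fin n → Option Bool) : Prop :=
  ∀ ℓ b, α ℓ = some b → β ℓ = some b

/-- The protocol `B` is monotone: each map `A_ℓ` is monotone w.r.t. the extension order. -/
def MonotoneOO {n : ℕ} (B : Fin n → (Fin n → Option Bool) → Bool) : Prop :=
  ∀ (ℓ : Fin n) (α β : Fin n → Option Bool), OExtends α β → B ℓ α = true → B ℓ β = true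

/-- `τ` is obtained from `σ` by bumping the elements of `S` to the end: the elements not
in `S` keep their relative order and all precede the elements of `S` in `τ`. -/
def IsBump {n : ℕ} (σ τ : Equiv.Perm (Fin n)) (S : Finset (Fin n)) : Prop :=
  (∀ ℓ m : Fin n, ℓ ∉ S → m ∉ S → (σ.symm ℓ ≤ σ.symm m ↔ τ.symm ℓ ≤ τ.symm m)) ∧
  (∀ ℓ m : Fin n, ℓ ∉ S → m ∈ S → τ.symm ℓ < τ.symm m)

/-!
Induct along `τ`. When `τ t` arrives in `τ`, the current assignment holds only the zeros that
were written on `τ 0, …, τ (t-1)`. These are unbumped, like `τ t`, so they keep their relative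
order and have already arrived when `τ t` arrives in `σ`, where they were also written `0`. Hence
the assignment Alice sees in `σ` extends the one she sees in `τ`, and monotonicity turns the `0`
written in `σ` into a `0` written in `τ`.
-/

section Protocol

variable {n : ℕ} (B : Fin n → (Fin n → Option Bool) → Bool) (σ : Equiv.Perm (Fin n))

theorem partOO_apply (t : ℕ) (ℓ : Fin n) :
    partOO B σ t ℓ = if (σ.symm ℓ : ℕ) < t then some (writeOO B σ ℓ) else none := by
  induction t with
  | zero => simp [partOO]
  | succ t ih =>
    rw [partOO]
    split_ifs with ht hlt hlt
    · rcases eq_or_ne ℓ (σ ⟨t, ht⟩) with rfl | hne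
      · simp [writeOO]
      · have hℓt : (σ.symm ℓ : ℕ) ≠ t := fun h => hne (by simp [← h])
        rw [Function.update_of_ne hne, ih, if_pos (by omega)]
    · rcases eq_or_ne ℓ (σ ⟨t, ht⟩) with rfl | hne
      · simp at hlt
      · rw [Function.update_of_ne hne, ih, if_neg (by omega)]
    · rw [ih, if_pos (by omega)]
    · have := (σ.symm ℓ).isLt
      omega

theorem oExtends_partOO {β : Fin n → Option Bool} {t : ℕ}
    (hβ : ∀ ℓ, (σ.symm ℓ : ℕ) < t → β ℓ = some (writeOO B σ ℓ)) :
    OExtends (partOO B σ t) β := by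
  intro ℓ b hb
  rw [partOO_apply] at hb
  split_ifs at hb with hlt
  · rw [hβ ℓ hlt, hb]

theorem writeOO_apply_self (t : Fin n) : writeOO B σ (σ t) = B (σ t) (partOO B σ t) := by
  rw [writeOO, Equiv.symm_apply_apply]

end Protocol

theorem MonotoneOO.eq_false_of_oExtends {n : ℕ} {B : Fin n → (Fin n → Option Bool) → Bool}
    (hB : MonotoneOO B) {ℓ : Fin n} {α β : Fin n → Option Bool} (hαβ : OExtends α β)
    (hβ : B ℓ β = false) : B ℓ α = false := by
  by_contra hα
  simpa [hβ] using hB ℓ α β hαβ (by simpa using hα)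

theorem IsBump.symm_lt_iff {n : ℕ} {σ τ : Equiv.Perm (Fin n)} {S : Finset (Fin n)}
    (h : IsBump σ τ S) {ℓ k : Fin n} (hℓ : ℓ ∉ S) (hk : k ∉ S) :
    σ.symm ℓ < σ.symm k ↔ τ.symm ℓ < τ.symm k := by
  simpa only [not_le] using (h.1 k ℓ hk hℓ).not

/-- bump lemma: let `B` be a monotone order-oblivious protocol, and let
`τ` be obtained from `σ` by bumping the elements of `S` to the end.  If the first `m`
elements of `τ` are not bumped and Alice wrote `0` on each of them when streamed `σ`,
then she also writes `0` on each of them when streamed `τ`. -/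
theorem bump_lemma {n : ℕ} (B : Fin n → (Fin n → Option Bool) → Bool)
    (hB : MonotoneOO B) (σ τ : Equiv.Perm (Fin n)) (S : Finset (Fin n))
    (hbump : IsBump σ τ S) (m : ℕ)
    (hfirst : ∀ t : Fin n, (t : ℕ) < m → τ t ∉ S)
    (hzero : ∀ t : Fin n, (t : ℕ) < m → writeOO B σ (τ t) = false) :
    ∀ t : Fin n, (t : ℕ) < m → writeOO B τ (τ t) = false := by
  intro t
  induction t using WellFoundedLT.induction with
  | ind t ih =>
    intro htm
    have hprefix : OExtends (partOO B τ t) (partOO B σ (σ.symm (τ t))) := by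
      refine oExtends_partOO B τ fun ℓ hℓ => ?_
      obtain ⟨s, rfl⟩ := τ.surjective ℓ
      have hst : s < t := by rwa [Equiv.symm_apply_apply] at hℓ
      have hsm : (s : ℕ) < m := lt_trans hst htm
      have hσ : (σ.symm (τ s) : ℕ) < σ.symm (τ t) :=
        (hbump.symm_lt_iff (hfirst s hsm) (hfirst t htm)).mpr (by simpa using hst)
      rw [partOO_apply, if_pos hσ, hzero s hsm, ih s hst hsm]
    rw [writeOO_apply_self]
    exact hB.eq_false_of_oExtends hprefix (hzero t htm)
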